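/- arXiv:2310.02480 — 2 statements merged into one kernel-verified Lean document; each statement's English description precedes it below -/
import Mathlib

section
/- No set of d+2 points in ℝ^d can be shattered by closed Euclidean balls. Hence the VC-dimension of Euclidean balls in ℝ^d is at most d+1. -/
def Shatters {α : Type*} (H : Set (Set α)) (S : Finset α) : Prop :=
  ∀ A : Finset α, A ⊆ S → ∃ h ∈ H, (S : Set α) ∩ h = (A : Set α)

def EuclBalls (d : ℕ) : Set (Set (EuclideanSpace ℝ (Fin d))) :=
  {s | ∃ (c : EuclideanSpace ℝ (Fin d)) (r : ℝ), 0 ≤ r ∧ s = Metric.closedBall c r}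

/-!
By Radon's theorem, `d + 2` points of `ℝ^d` split into parts `A` and `S \ A` whose convex hulls
meet. If balls `B₁`, `B₂` cut out `A` and `S \ A`, then `A` lies where the power of a point with
respect to `B₁` is smaller than with respect to `B₂`, and `S \ A` where it is larger. The difference
of the two powers is affine (the radical hyperplane), so both regions are convex half-spaces and
contain the respective convex hulls, which are therefore disjoint.
-/

open Metric Module

theorem Shatters.exists_subset_diff_subset_diff {α : Type*} {H : Set (Set α)} {S A : Finset α}
    (hS : Shatters H S) (hA : A ⊆ S) :
    ∃ h₁ ∈ H, ∃ h₂ ∈ H, (A : Set α) ⊆ h₁ \ h₂ ∧ (S : Set α) \ A ⊆ h₂ \ h₁ := by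
  classical
  obtain ⟨h₁, mem₁, eq₁⟩ := hS A hA
  obtain ⟨h₂, mem₂, eq₂⟩ := hS (S \ A) Finset.sdiff_subset
  rw [Finset.coe_sdiff] at eq₂
  refine ⟨h₁, mem₁, h₂, mem₂, fun x hx => ?_, fun x hx => ?_⟩
  · have hx₁ : x ∈ (S : Set α) ∩ h₁ := eq₁ ▸ hx
    exact ⟨hx₁.2, fun hx₂ => (eq₂ ▸ ⟨hx₁.1, hx₂⟩ : x ∈ (S : Set α) \ A).2 hx⟩
  · have hx₂ : x ∈ (S : Set α) ∩ h₂ := eq₂ ▸ hx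
    exact ⟨hx₂.2, fun hx₁ => hx.2 (eq₁ ▸ ⟨hx.1, hx₁⟩)⟩

theorem Finset.exists_radon_partition {𝕜 E : Type*} [Field 𝕜] [LinearOrder 𝕜]
    [IsStrictOrderedRing 𝕜] [AddCommGroup E] [Module 𝕜 E] [FiniteDimensional 𝕜 E]
    {S : Finset E} (hS : finrank 𝕜 E + 2 ≤ S.card) :
    ∃ A ⊆ S, (convexHull 𝕜 (A : Set E) ∩ convexHull 𝕜 ((S : Set E) \ A)).Nonempty := by
  have hdep : ¬ AffineIndependent 𝕜 ((↑) : S → E) := fun hind => by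
    have := hind.card_le_finrank_succ.trans
      (Nat.succ_le_succ (Submodule.finrank_le (vectorSpan 𝕜 (Set.range ((↑) : S → E)))))
    rw [Fintype.card_coe] at this
    omega
  obtain ⟨I, hI⟩ := Convex.radon_partition hdep
  have hfin : (((↑) : S → E) '' I).Finite := (Set.toFinite I).image _
  refine ⟨hfin.toFinset, fun x hx => ?_, ?_⟩
  · obtain ⟨y, -, rfl⟩ := hfin.mem_toFinset.1 hx
    exact y.2
  · rw [hfin.coe_toFinset]
    rwa [Set.image_compl_eq_range_sdiff_image Subtype.val_injective,
      Subtype.range_val_subtype] at hI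

namespace EuclideanGeometry.Sphere

variable {E : Type*} [NormedAddCommGroup E] [InnerProductSpace ℝ E]

theorem convex_setOf_power_lt (s₁ s₂ : Sphere E) :
    Convex ℝ {p : E | s₁.power p < s₂.power p} := by
  have hhalf : {p : E | s₁.power p < s₂.power p} = {p : E | innerₛₗ ℝ (s₂.center - s₁.center) p <
      (‖s₂.center‖ ^ 2 - s₂.radius ^ 2 - ‖s₁.center‖ ^ 2 + s₁.radius ^ 2) / 2} := by
    ext p
    simp only [Set.mem_ofPred_eq, power, dist_eq_norm, norm_sub_sq_real, innerₛₗ_apply_apply,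
      inner_sub_left, real_inner_comm p]
    constructor <;> intro <;> linarith
  rw [hhalf]
  exact convex_halfSpace_lt (innerₛₗ ℝ _).isLinear _

theorem disjoint_convexHull_closedBall_diff {s₁ s₂ : Sphere E} (h₁ : 0 ≤ s₁.radius)
    (h₂ : 0 ≤ s₂.radius) :
    Disjoint (convexHull ℝ (closedBall s₁.center s₁.radius \ closedBall s₂.center s₂.radius))
      (convexHull ℝ (closedBall s₂.center s₂.radius \ closedBall s₁.center s₁.radius)) := by
  have power_lt {t₁ t₂ : Sphere E} (ht₁ : 0 ≤ t₁.radius) (ht₂ : 0 ≤ t₂.radius) :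
      closedBall t₁.center t₁.radius \ closedBall t₂.center t₂.radius ⊆
        {p | t₁.power p < t₂.power p} := fun p hp =>
    ((power_nonpos_iff_dist_center_le_radius ht₁).2 hp.1).trans_lt
      ((power_pos_iff_radius_lt_dist_center ht₂).2 (not_le.1 hp.2))
  exact Disjoint.mono (convexHull_min (power_lt h₁ h₂) (convex_setOf_power_lt s₁ s₂))
    (convexHull_min (power_lt h₂ h₁) (convex_setOf_power_lt s₂ s₁))
    (Set.disjoint_left.2 fun _ => lt_asymm (α := ℝ))

end EuclideanGeometry.Sphere

open EuclideanGeometry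

theorem not_shatters_euclBalls_of_card_le {d : ℕ} {S : Finset (EuclideanSpace ℝ (Fin d))}
    (hS : d + 2 ≤ S.card) : ¬ Shatters (EuclBalls d) S := by
  intro hshat
  obtain ⟨A, hA, hradon⟩ := S.exists_radon_partition (𝕜 := ℝ) (by rwa [finrank_euclideanSpace_fin])
  obtain ⟨_, ⟨c₁, r₁, hr₁, rfl⟩, _, ⟨c₂, r₂, hr₂, rfl⟩, hA₁, hA₂⟩ :=
    hshat.exists_subset_diff_subset_diff hA
  refine (hradon.mono (Set.inter_subset_inter (convexHull_mono hA₁) (convexHull_mono hA₂)))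
    |>.not_disjoint ?_
  exact Sphere.disjoint_convexHull_closedBall_diff (s₁ := ⟨c₁, r₁⟩) (s₂ := ⟨c₂, r₂⟩) hr₁ hr₂

/-- No set of `d + 2` points in `ℝ^d` is shattered by closed Euclidean balls; hence the
VC-dimension of Euclidean balls in `ℝ^d` is at most `d + 1`. -/
theorem euclBalls_vcDim_le (d : ℕ) :
    (∀ S : Finset (EuclideanSpace ℝ (Fin d)), S.card = d + 2 → ¬ Shatters (EuclBalls d) S) ∧
    (∀ S : Finset (EuclideanSpace ℝ (Fin d)), Shatters (EuclBalls d) S → S.card ≤ d + 1) :=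
  ⟨fun _ hS => not_shatters_euclBalls_of_card_le hS.ge,
    fun _ hshat => not_lt.1 fun hS => not_shatters_euclBalls_of_card_le hS hshat⟩
end

section
/- Let H' be the class of closed Euclidean balls in ℝ^d and H = {B₁ ∪ B₂ : B₁, B₂ ∈ H'} the class of 2-fold unions of balls. Then the VC-dimension of H is at least 2d. -/
/-!
For an orthonormal family `e`, the ball centred at `c = ∑ j ∈ B, e j` of radius `‖c‖` passes
through the origin, so a unit vector `x` lies in it iff `1 ≤ 2 ⟪x, c⟫`. Hence it contains `e i`
exactly for `i ∈ B` and contains no `-e i`: balls shatter `{e i}` while avoiding `{-e i}`, and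
symmetrically. Unions of one ball of each kind then shatter the `2d` points `±e i` of `ℝ^d`.
-/

open Finset Metric RealInnerProductSpace

theorem Shatters.union {α : Type*} [DecidableEq α] {C : Set (Set α)} {S T : Finset α}
    (hS : Shatters {h ∈ C | Disjoint h T} S) (hT : Shatters {h ∈ C | Disjoint h S} T) :
    Shatters {u | ∃ B₁ ∈ C, ∃ B₂ ∈ C, u = B₁ ∪ B₂} (S ∪ T) := by
  intro A hA
  obtain ⟨h₁, ⟨h₁C, h₁T⟩, hA₁⟩ := hS (A ∩ S) inter_subset_right
  obtain ⟨h₂, ⟨h₂C, h₂S⟩, hA₂⟩ := hT (A ∩ T) inter_subset_right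
  refine ⟨h₁ ∪ h₂, ⟨h₁, h₁C, h₂, h₂C, rfl⟩, ?_⟩
  calc ((S ∪ T : Finset α) : Set α) ∩ (h₁ ∪ h₂) = ((S : Set α) ∩ h₁) ∪ ((T : Set α) ∩ h₂) := by
        rw [coe_union, Set.union_inter_distrib_right, Set.inter_union_distrib_left,
          Set.inter_union_distrib_left, h₂S.symm.inter_eq, Set.inter_comm (T : Set α),
          h₁T.inter_eq, Set.union_empty, Set.empty_union]
    _ = A := by
        rw [hA₁, hA₂, ← coe_union, ← inter_union_distrib_left, inter_eq_left.mpr hA]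

section Orthonormal

variable {E ι : Type*} [NormedAddCommGroup E] [InnerProductSpace ℝ E]

theorem mem_closedBall_norm_iff_of_norm_eq_one {x : E} (hx : ‖x‖ = 1) (c : E) :
    x ∈ closedBall c ‖c‖ ↔ 1 ≤ 2 * ⟪x, c⟫ := by
  rw [mem_closedBall, dist_eq_norm, ← sq_le_sq₀ (norm_nonneg _) (norm_nonneg _),
    norm_sub_sq_real, hx]
  constructor <;> intro h <;> linarith

variable {e : ι → E}

theorem Orthonormal.inner_sum_finset [DecidableEq ι] (he : Orthonormal ℝ e) (A : Finset ι)
    (i : ι) :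
    ⟪e i, ∑ j ∈ A, e j⟫ = if i ∈ A then 1 else 0 := by
  simp [inner_sum, orthonormal_iff_ite.mp he]

theorem Orthonormal.mem_closedBall_sum_iff (he : Orthonormal ℝ e) (A : Finset ι) (i : ι) :
    e i ∈ closedBall (∑ j ∈ A, e j) ‖∑ j ∈ A, e j‖ ↔ i ∈ A := by
  classical
  rw [mem_closedBall_norm_iff_of_norm_eq_one (he.norm_eq_one i), he.inner_sum_finset]
  split_ifs <;> norm_num [*]

theorem Orthonormal.neg_notMem_closedBall_sum (he : Orthonormal ℝ e) (A : Finset ι) (i : ι) :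
    -e i ∉ closedBall (∑ j ∈ A, e j) ‖∑ j ∈ A, e j‖ := by
  classical
  rw [mem_closedBall_norm_iff_of_norm_eq_one (by rw [norm_neg, he.norm_eq_one]), inner_neg_left,
    he.inner_sum_finset]
  split_ifs <;> norm_num

theorem Orthonormal.neg (he : Orthonormal ℝ e) : Orthonormal ℝ (-e) := by
  classical
  simpa [orthonormal_iff_ite] using he

theorem Orthonormal.disjoint_image_neg [DecidableEq E] (he : Orthonormal ℝ e) (s : Finset ι) :
    Disjoint (s.image e) (s.image (-e)) := by
  simp only [disjoint_left, mem_image, Pi.neg_apply]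
  rintro _ ⟨i, -, rfl⟩ ⟨j, -, hj⟩
  exact he.neg_notMem_closedBall_sum {i} j
    (hj ▸ (he.mem_closedBall_sum_iff {i} i).mpr (mem_singleton_self i))

theorem Orthonormal.shatters_image [Fintype ι] [DecidableEq E] (he : Orthonormal ℝ e) :
    Shatters {h | (∃ c r, 0 ≤ r ∧ h = closedBall c r) ∧ Disjoint h (univ.image (-e) : Set E)}
      (univ.image e) := by
  intro A hA
  set c := ∑ j ∈ univ.filter (e · ∈ A), e j
  refine ⟨closedBall c ‖c‖, ⟨⟨c, ‖c‖, norm_nonneg c, rfl⟩, ?_⟩, ?_⟩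
  · rw [coe_image, coe_univ, Set.image_univ]
    exact Set.disjoint_right.mpr fun _ ⟨i, hi⟩ => hi ▸ he.neg_notMem_closedBall_sum _ i
  · ext x
    simp only [Set.mem_inter_iff, mem_coe, mem_image, mem_univ, true_and]
    constructor
    · rintro ⟨⟨i, rfl⟩, hi⟩
      simpa using (he.mem_closedBall_sum_iff _ i).mp hi
    · intro hx
      obtain ⟨i, -, rfl⟩ := mem_image.mp (hA hx)
      exact ⟨⟨i, rfl⟩, (he.mem_closedBall_sum_iff _ i).mpr (by simpa using hx)⟩

end Orthonormal

/-- The class of 2-fold unions of closed Euclidean balls in `ℝ^d` has VC-dimension at least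
`2 * d`: it shatters some set of `2 * d` points. -/
theorem twoFoldUnions_balls_vcDim_ge (d : ℕ) :
    ∃ S : Finset (EuclideanSpace ℝ (Fin d)), S.card = 2 * d ∧
      Shatters {u | ∃ B₁ ∈ EuclBalls d, ∃ B₂ ∈ EuclBalls d, u = B₁ ∪ B₂} S := by
  classical
  set e : Fin d → EuclideanSpace ℝ (Fin d) := fun i => EuclideanSpace.single i 1
  have he : Orthonormal ℝ e := EuclideanSpace.orthonormal_single
  refine ⟨univ.image e ∪ univ.image (-e), ?_, Shatters.union he.shatters_image ?_⟩
  · rw [card_union_of_disjoint (he.disjoint_image_neg univ),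
      card_image_of_injective _ he.linearIndependent.injective,
      card_image_of_injective _ he.neg.linearIndependent.injective, card_univ, Fintype.card_fin,
      two_mul]
  · have h := he.neg.shatters_image
    rwa [neg_neg] at h
end
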